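/- The n × m Rook's grid is opposable if and only if both n and m are even; when both are even, (x,y) ↦ (n−x−1, m−y−1) is an opposition. -/

import Mathlib

/-- An *opposition* of a simple graph `G`: an automorphism `f` of order two such that
`f v ∉ N[v]` for every vertex `v` (i.e. `f v ≠ v` and `f v` is not adjacent to `v`). -/
def IsOpposition {V : Type*} (G : SimpleGraph V) (f : V → V) : Prop :=
  (∀ u v, G.Adj u v ↔ G.Adj (f u) (f v)) ∧ (∀ v, f (f v) = v) ∧
    ∀ v, f v ≠ v ∧ ¬ G.Adj v (f v)

/-- A graph is *opposable* if it admits an opposition. -/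
def Opposable {V : Type*} (G : SimpleGraph V) : Prop := ∃ f, IsOpposition G f

/-- `f` is an opposition of the subgraph of `G` induced by the vertex set `S`. -/
def IsOppositionOn {V : Type*} (G : SimpleGraph V) (S : Set V) (f : V → V) : Prop :=
  (∀ v ∈ S, f v ∈ S) ∧ (∀ u ∈ S, ∀ v ∈ S, (G.Adj u v ↔ G.Adj (f u) (f v))) ∧
    (∀ v ∈ S, f (f v) = v) ∧ ∀ v ∈ S, f v ≠ v ∧ ¬ G.Adj v (f v)

/-- A graph is *almost opposable* if deleting some admissible set `S`
(`u ∈ S ⊆ N[u]` for some vertex `u`) yields an opposable graph. -/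
def AlmostOpposable {V : Type*} (G : SimpleGraph V) : Prop :=
  ∃ (u : V) (S : Set V), u ∈ S ∧ (∀ v ∈ S, v = u ∨ G.Adj u v) ∧
    ∃ f, IsOppositionOn G Sᶜ f

/-- The `n × m` Rook's grid. -/
def rookGrid (n m : ℕ) : SimpleGraph (Fin n × Fin m) :=
  SimpleGraph.fromRel fun p q => p.1 = q.1 ∨ p.2 = q.2

/-! An opposition `f` of the Rook's grid moves every vertex to a different row and a different
column. The row through `x` is a clique, so its image is a clique; a clique with two vertices in
one row lies in that row, so the image of row `x` lies in one row or in one column, and it cannot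
lie in a column `y`, which would then contain both `(x, y)` and `f (x, y)`. Hence `f` induces a
fixed-point-free involution of the rows, and `n` is even; transposing, `m` is even. -/

theorem Function.Involutive.even_card {α : Type*} [Fintype α] {σ : α → α}
    (hσ : Function.Involutive σ) (hne : ∀ a, σ a ≠ a) : Even (Fintype.card α) := by
  classical
  have hsupp : hσ.toPerm.support = Finset.univ := by
    ext a
    simpa using hne a
  rw [even_iff_two_dvd, ← Finset.card_univ, ← hsupp]
  exact Equiv.Perm.two_dvd_card_support (by ext a; simp [sq, hσ a])

theorem Prod.fst_eq_of_fst_eq_of_ne {α β : Type*} {p q r : α × β} (hpq : p ≠ q)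
    (h : p.1 = q.1) (hp : r.1 = p.1 ∨ r.2 = p.2) (hq : r.1 = q.1 ∨ r.2 = q.2) :
    r.1 = p.1 := by
  grind [Prod.ext_iff]

theorem Fin.rev_ne_self {n : ℕ} (hn : Even n) (i : Fin n) : i.rev ≠ i := by
  intro h
  have := congrArg Fin.val h
  rw [Fin.val_rev] at this
  obtain ⟨k, rfl⟩ := hn
  omega

namespace IsOpposition

variable {V W : Type*} {G : SimpleGraph V} {H : SimpleGraph W} {f : W → W}

theorem injective (hf : IsOpposition H f) : Function.Injective f :=
  Function.Involutive.injective hf.2.1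

theorem comap (e : G ≃g H) (hf : IsOpposition H f) : IsOpposition G (e.symm ∘ f ∘ e) := by
  obtain ⟨hadj, hinv, hopp⟩ := hf
  refine ⟨fun u v => ?_, fun v => ?_, fun v => ⟨?_, ?_⟩⟩
  · simp only [Function.comp_apply]
    rw [e.symm.map_adj_iff, ← hadj, e.map_adj_iff]
  · simp [hinv]
  · simpa [e.symm_apply_eq] using (hopp (e v)).1
  · simpa [← e.map_adj_iff] using (hopp (e v)).2

end IsOpposition

theorem rookGrid_adj {n m : ℕ} {p q : Fin n × Fin m} :
    (rookGrid n m).Adj p q ↔ p ≠ q ∧ (p.1 = q.1 ∨ p.2 = q.2) := by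
  simp only [rookGrid, SimpleGraph.fromRel_adj]
  grind

def rookGridSwap (n m : ℕ) : rookGrid n m ≃g rookGrid m n where
  toEquiv := Equiv.prodComm _ _
  map_rel_iff' := by
    intro p q
    simp [rookGrid_adj, or_comm]

namespace IsOpposition

variable {n m : ℕ} {f : Fin n × Fin m → Fin n × Fin m}

theorem fst_ne (hf : IsOpposition (rookGrid n m) f) (p : Fin n × Fin m) : (f p).1 ≠ p.1 :=
  fun h => (hf.2.2 p).2 (rookGrid_adj.2 ⟨(hf.2.2 p).1.symm, Or.inl h.symm⟩)

theorem snd_ne (hf : IsOpposition (rookGrid n m) f) (p : Fin n × Fin m) : (f p).2 ≠ p.2 :=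
  fun h => (hf.2.2 p).2 (rookGrid_adj.2 ⟨(hf.2.2 p).1.symm, Or.inr h.symm⟩)

theorem fst_eq_or_snd_eq (hf : IsOpposition (rookGrid n m) f) (p q : Fin n × Fin m)
    (h : p.1 = q.1 ∨ p.2 = q.2) : (f p).1 = (f q).1 ∨ (f p).2 = (f q).2 := by
  by_cases hpq : p = q
  · simp [hpq]
  · exact (rookGrid_adj.1 ((hf.1 p q).1 (rookGrid_adj.2 ⟨hpq, h⟩))).2

theorem fst_map_eq_fst_map (hf : IsOpposition (rookGrid n m) f) (x : Fin n) (y y' : Fin m) :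
    (f (x, y)).1 = (f (x, y')).1 := by
  set y₁ := (f (x, y)).2
  have hne : f (x, y) ≠ f (x, y₁) :=
    hf.injective.ne fun h => hf.snd_ne (x, y) (congrArg Prod.snd h).symm
  have hrow : (f (x, y)).1 = (f (x, y₁)).1 :=
    (hf.fst_eq_or_snd_eq (x, y) (x, y₁) (Or.inl rfl)).resolve_right fun h =>
      hf.snd_ne (x, y₁) h.symm
  have hrow' : ∀ y', (f (x, y')).1 = (f (x, y)).1 := fun y' =>
    Prod.fst_eq_of_fst_eq_of_ne hne hrow (hf.fst_eq_or_snd_eq _ _ (Or.inl rfl))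
      (hf.fst_eq_or_snd_eq _ _ (Or.inl rfl))
  exact (hrow' y').symm

theorem even_left (hm : 0 < m) (hf : IsOpposition (rookGrid n m) f) : Even n := by
  let y₀ : Fin m := ⟨0, hm⟩
  let σ : Fin n → Fin n := fun x => (f (x, y₀)).1
  have hσ : Function.Involutive σ := fun x =>
    calc σ (σ x) = (f (σ x, (f (x, y₀)).2)).1 := hf.fst_map_eq_fst_map _ _ _
      _ = x := by rw [Prod.mk.eta, hf.2.1]
  simpa using hσ.even_card fun x => hf.fst_ne (x, y₀)

theorem even_right (hn : 0 < n) (hf : IsOpposition (rookGrid n m) f) : Even m :=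
  (hf.comap (rookGridSwap m n)).even_left hn

end IsOpposition

theorem rookGrid_isOpposition_rev {n m : ℕ} (hn : Even n) (hm : Even m) :
    IsOpposition (rookGrid n m) fun p => (p.1.rev, p.2.rev) := by
  refine ⟨fun u v => ?_, fun v => by simp, fun v => ⟨fun h => ?_, fun h => ?_⟩⟩
  · simp [rookGrid_adj, Prod.ext_iff, Fin.rev_inj]
  · exact Fin.rev_ne_self hn v.1 (congrArg Prod.fst h)
  · rcases (rookGrid_adj.1 h).2 with h | h
    · exact Fin.rev_ne_self hn v.1 h.symm
    · exact Fin.rev_ne_self hm v.2 h.symm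

theorem rookGrid_opposable_iff (n m : ℕ) (hn0 : 0 < n) (hm0 : 0 < m) :
    (Opposable (rookGrid n m) ↔ Even n ∧ Even m) ∧
      (Even n → Even m →
        IsOpposition (rookGrid n m) (fun p => (p.1.rev, p.2.rev))) :=
  ⟨⟨fun ⟨_, hf⟩ => ⟨hf.even_left hm0, hf.even_right hn0⟩,
    fun ⟨hn, hm⟩ => ⟨_, rookGrid_isOpposition_rev hn hm⟩⟩,
    fun hn hm => rookGrid_isOpposition_rev hn hm⟩
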